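/- arXiv:2502.19753 — 2 statements merged into one kernel-verified Lean document; each statement's English description precedes it below -/
import Mathlib

section
/- Let n ≥ 4 be an integer with n ≡ 0 (mod 4) and n ≢ 0 (mod 8), m a positive integer, and C a code of length m over S = 𝔽₂ × 𝔽₂. Then: (1) Γ_C is integral if and only if C ⊆ C̄^⊥; (2) Γ_C is unimodular if and only if C is Hermitian self-dual; (3) Γ_C is even if and only if 2 divides wt_H(w) for every w ∈ C; (4) Γ_C is even unimodular if and only if C is Type IV. -/
open Finset

/-- The ring `𝔽₂ × 𝔽₂`. -/
abbrev S22 : Type := ZMod 2 × ZMod 2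

/-- The bilinear form of `m` copies of the dual `D_n` root lattice (`n` even),
written in the dual basis: `B(x,y) = Σ_i Σ_j Σ_s (1/4)(n − 2|j−s|) x_{ij} y_{is}`. -/
noncomputable def BDev (n m : ℕ) (x y : Fin m → Fin n → ℚ) : ℚ :=
  ∑ i, ∑ j : Fin n, ∑ s : Fin n,
    (1 / 4) * ((n : ℚ) - 2 * |((j : ℕ) : ℚ) - ((s : ℕ) : ℚ)|) * x i j * y i s

/-- `a_i(x)`: the sum of the odd-numbered (`1`-indexed) coordinates, mod 2. -/
def aD (n m : ℕ) (x : Fin m → Fin n → ℤ) (i : Fin m) : ZMod 2 :=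
  ((∑ j ∈ Finset.univ.filter (fun j : Fin n => (j : ℕ) % 2 = 0), x i j : ℤ) : ZMod 2)

/-- `b_i(x)`: the sum of the even-numbered (`1`-indexed) coordinates, mod 2. -/
def bD (n m : ℕ) (x : Fin m → Fin n → ℤ) (i : Fin m) : ZMod 2 :=
  ((∑ j ∈ Finset.univ.filter (fun j : Fin n => (j : ℕ) % 2 = 1), x i j : ℤ) : ZMod 2)

/-- The reduction map `ρ` to `(𝔽₂ × 𝔽₂)^m`, `ρ(x)_i = (a_i, b_i)`. -/
def rhoS (n m : ℕ) (x : Fin m → Fin n → ℤ) : Fin m → S22 :=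
  fun i => (aD n m x i, bD n m x i)

/-- Coordinatewise conjugation `(a,b)‾ = (b,a)` on `(𝔽₂ × 𝔽₂)^m`. -/
def conjS (m : ℕ) (w : Fin m → S22) : Fin m → S22 :=
  fun i => ((w i).2, (w i).1)

/-- `N₀`: the number of coordinates equal to `(0,0)`. -/
def N0S (m : ℕ) (w : Fin m → S22) : ℕ :=
  (Finset.univ.filter (fun i => w i = (0, 0))).card

/-- `N₂`: the number of coordinates equal to `(1,1)`. -/
def N2S (m : ℕ) (w : Fin m → S22) : ℕ :=
  (Finset.univ.filter (fun i => w i = (1, 1))).card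

/-- `N₁ = m − N₀ − N₂`. -/
def N1S (m : ℕ) (w : Fin m → S22) : ℕ :=
  m - N0S m w - N2S m w

/-- The Hamming weight `wt_H = N₁ + N₂`. -/
def wtHS (m : ℕ) (w : Fin m → S22) : ℕ :=
  N1S m w + N2S m w

/-- The dual code of a set of codewords over `𝔽₂ × 𝔽₂`. -/
def dualCodeS (m : ℕ) (C : Set (Fin m → S22)) : Set (Fin m → S22) :=
  {w | ∀ v ∈ C, ∑ i, w i * v i = 0}

/-- The lattice `Γ_C` constructed from the code `C`. -/
def GammaS (n m : ℕ) (C : Set (Fin m → S22)) : Set (Fin m → Fin n → ℤ) :=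
  {x | rhoS n m x ∈ C}

/-- Coercion of an integral vector to a rational vector. -/
def toQD (n m : ℕ) (x : Fin m → Fin n → ℤ) : Fin m → Fin n → ℚ :=
  fun i j => (x i j : ℚ)

/-- The dual lattice `Γ_C^*`, taken inside the `ℚ`-valued vectors. -/
noncomputable def dualLatticeS (n m : ℕ) (C : Set (Fin m → S22)) :
    Set (Fin m → Fin n → ℚ) :=
  {z | ∀ y ∈ GammaS n m C, ∃ k : ℤ, (k : ℚ) = BDev n m z (toQD n m y)}

/-- `Γ_C` is integral. -/
def IsIntegralS (n m : ℕ) (C : Set (Fin m → S22)) : Prop :=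
  ∀ x ∈ GammaS n m C, ∀ y ∈ GammaS n m C,
    ∃ k : ℤ, (k : ℚ) = BDev n m (toQD n m x) (toQD n m y)

/-- `Γ_C` is even. -/
def IsEvenLatS (n m : ℕ) (C : Set (Fin m → S22)) : Prop :=
  IsIntegralS n m C ∧ ∀ x ∈ GammaS n m C,
    ∃ k : ℤ, ((2 * k : ℤ) : ℚ) = BDev n m (toQD n m x) (toQD n m x)

/-- `Γ_C` is unimodular. -/
def IsUnimodularS (n m : ℕ) (C : Set (Fin m → S22)) : Prop :=
  dualLatticeS n m C = toQD n m '' GammaS n m C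

/-- A code over `𝔽₂ × 𝔽₂` is Hermitian self-dual if `C = C̄^⊥`. -/
def IsHermitianSelfDualS (m : ℕ) (C : Set (Fin m → S22)) : Prop :=
  C = dualCodeS m (conjS m '' C)

/-- A code over `𝔽₂ × 𝔽₂` is Type IV if it is Hermitian self-dual and all
Hamming weights are even. -/
def IsTypeIVS (m : ℕ) (C : Set (Fin m → S22)) : Prop :=
  IsHermitianSelfDualS m C ∧ ∀ w ∈ C, 2 ∣ wtHS m w

/-!
`4B` is an integer form, and writing `|j - s| = j + s - 2 min(j, s)` shows what it sees
modulo `4` and `8`: for `4 ∣ n`, `4B(x, y) ≡ 2 Tr(ρ(x) · ρ(y)‾) (mod 4)`, and for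
`n ≡ 4 (mod 8)`, `4B(x, x) ≡ 4 wt_H(ρ(x)) (mod 8)`. As `ρ` is surjective, this turns integrality
and evenness of `Γ_C` into the corresponding statements about `C`.

For unimodularity one shows `Γ_C^* = Γ_{C̄^⊥}`; the point is that `Γ_C^*` is integral. Let
`g(s) = B(z, e_s)` (in one block) be extended to all `s ∈ ℤ` by the same formula. Then
`z_k = 2 g(k) - g(k - 1) - g(k + 1)`, the extension satisfies `g(-1) = -g(n - 1)` and
`g(n) = -g(0)`, and for `s ≡ t (mod 2)` the vector `e_s + e_t` lies in `ker ρ ⊆ Γ_C`, so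
`g(s) + g(t) ∈ ℤ`; for even `n` these combine to `z_k ∈ ℤ`.
-/

theorem CharTwo.sum_sum_eq_sum_diag {R ι : Type*} [CommRing R] [CharP R 2] [Fintype ι]
    [DecidableEq ι] (g : ι → ι → R) (hg : ∀ j s, g j s = g s j) :
    ∑ j, ∑ s, g j s = ∑ j, g j j := by
  have hoff : ∑ p : ι × ι, (if p.1 = p.2 then 0 else g p.1 p.2) = 0 := by
    refine Finset.sum_ninvolution Prod.swap (fun p => ?_) (fun p hp hswap => hp ?_)
      (fun _ => Finset.mem_univ _) Prod.swap_swap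
    · by_cases h : p.1 = p.2
      · simp [h]
      · simp [h, Ne.symm h, hg p.2 p.1, CharTwo.add_self_eq_zero]
    · simp [(congrArg Prod.fst hswap).symm]
  calc ∑ j, ∑ s, g j s
      = ∑ p : ι × ι,
          ((if p.1 = p.2 then g p.1 p.2 else 0) + if p.1 = p.2 then 0 else g p.1 p.2) := by
        rw [← Fintype.sum_prod_type']
        exact Finset.sum_congr rfl fun p _ => by split_ifs <;> simp
    _ = ∑ j, g j j := by
        rw [Finset.sum_add_distrib, hoff, add_zero, Fintype.sum_prod_type]
        simp

section IntegerForm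

variable {n m : ℕ}

def fourGram (n : ℕ) (j s : ℤ) : ℤ := n - 2 * |j - s|

lemma BDev_eq_sum_fourGram (z y : Fin m → Fin n → ℚ) :
    BDev n m z y = ∑ i, ∑ j : Fin n, ∑ s : Fin n, (fourGram n j s : ℚ) / 4 * z i j * y i s := by
  simp only [BDev, fourGram]
  push_cast
  ring_nf

def fourB (x y : Fin m → Fin n → ℤ) : ℤ :=
  ∑ i, ∑ j : Fin n, ∑ s : Fin n, fourGram n j s * x i j * y i s

lemma BDev_toQD (x y : Fin m → Fin n → ℤ) :
    BDev n m (toQD n m x) (toQD n m y) = (fourB x y : ℚ) / 4 := by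
  rw [BDev_eq_sum_fourGram, fourB]
  push_cast
  simp only [Finset.sum_div, toQD]
  exact Finset.sum_congr rfl fun i _ => Finset.sum_congr rfl fun j _ =>
    Finset.sum_congr rfl fun s _ => by ring

def blockSum (x : Fin m → Fin n → ℤ) (i : Fin m) : ℤ := ∑ j, x i j

def blockMoment (x : Fin m → Fin n → ℤ) (i : Fin m) : ℤ := ∑ j : Fin n, (j : ℤ) * x i j

def minForm (x y : Fin m → Fin n → ℤ) : ℤ :=
  ∑ i, ∑ j : Fin n, ∑ s : Fin n, min (j : ℤ) s * x i j * y i s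

lemma fourGram_eq (j s : ℤ) : fourGram n j s = n - 2 * (j + s) + 4 * min j s := by
  rw [fourGram, ← max_sub_min_eq_abs, min_comm j s]
  linarith [min_add_max s j]

lemma fourB_eq (x y : Fin m → Fin n → ℤ) :
    fourB x y = n * ∑ i, blockSum x i * blockSum y i
      - 2 * ∑ i, (blockMoment x i * blockSum y i + blockSum x i * blockMoment y i)
      + 4 * minForm x y := by
  have hterm : ∀ i, ∀ j s : Fin n, fourGram n j s * x i j * y i s
      = n * (x i j * y i s) - 2 * ((j : ℤ) * x i j * y i s + x i j * ((s : ℤ) * y i s))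
        + 4 * (min (j : ℤ) s * x i j * y i s) := by
    intro i j s
    rw [fourGram_eq]
    ring
  simp only [fourB, minForm, blockSum, blockMoment, hterm, Finset.sum_add_distrib,
    Finset.sum_sub_distrib, ← Finset.mul_sum, ← Finset.sum_mul]

lemma intCast_blockSum (x : Fin m → Fin n → ℤ) (i : Fin m) :
    (blockSum x i : ZMod 2) = aD n m x i + bD n m x i := by
  rw [blockSum, aD, bD, ← Int.cast_add,
    ← Finset.sum_filter_add_sum_filter_not Finset.univ (fun j : Fin n => (j : ℕ) % 2 = 0)]
  simp only [Nat.mod_two_ne_zero]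

lemma intCast_blockMoment (x : Fin m → Fin n → ℤ) (i : Fin m) :
    (blockMoment x i : ZMod 2) = bD n m x i := by
  rw [blockMoment, bD, ← Finset.sum_filter_add_sum_filter_not Finset.univ
    (fun j : Fin n => (j : ℕ) % 2 = 1)]
  push_cast
  have hodd : ∑ j ∈ Finset.univ.filter (fun j : Fin n => (j : ℕ) % 2 = 1),
      ((j : ℕ) : ZMod 2) * (x i j : ZMod 2)
      = ∑ j ∈ Finset.univ.filter (fun j : Fin n => (j : ℕ) % 2 = 1), (x i j : ZMod 2) :=
    Finset.sum_congr rfl fun j hj => by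
      rw [CharTwo.natCast_eq_mod, (Finset.mem_filter.mp hj).2, Nat.cast_one, one_mul]
  have heven : ∑ j ∈ Finset.univ.filter (fun j : Fin n => ¬(j : ℕ) % 2 = 1),
      ((j : ℕ) : ZMod 2) * (x i j : ZMod 2) = 0 :=
    Finset.sum_eq_zero fun j hj => by
      rw [CharTwo.natCast_eq_mod, Nat.mod_two_ne_one.mp (Finset.mem_filter.mp hj).2,
        Nat.cast_zero, zero_mul]
  rw [hodd, heven, add_zero]

lemma intCast_minForm_self (x : Fin m → Fin n → ℤ) :
    (minForm x x : ZMod 2) = ∑ i, bD n m x i := by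
  rw [minForm]
  push_cast
  refine Finset.sum_congr rfl fun i _ => ?_
  rw [CharTwo.sum_sum_eq_sum_diag _ fun j s => by rw [min_comm]; ring, ← intCast_blockMoment,
    blockMoment]
  push_cast
  refine Finset.sum_congr rfl fun j _ => ?_
  have hidem : ∀ a : ZMod 2, a * a = a := by decide
  rw [min_self, mul_assoc, hidem, Int.cast_natCast]

end IntegerForm

section Codes

variable {m : ℕ}

-- The sum of the two coordinates of `w · v̄ ∈ 𝔽₂ × 𝔽₂`.
def hermTrace (w v : Fin m → S22) : ZMod 2 :=
  ∑ i, ((w i).1 * (v i).2 + (w i).2 * (v i).1)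

def wtParity (w : Fin m → S22) : ZMod 2 :=
  ∑ i, ((w i).1 + (w i).2 + (w i).1 * (w i).2)

lemma mem_dualCodeS_conjS_iff (C : Submodule S22 (Fin m → S22)) (w : Fin m → S22) :
    w ∈ dualCodeS m (conjS m '' C) ↔ ∀ v ∈ C, hermTrace w v = 0 := by
  have hcomp : ∀ v : Fin m → S22, ∑ i, w i * conjS m v i = 0
      ↔ ∑ i, (w i).1 * (v i).2 = 0 ∧ ∑ i, (w i).2 * (v i).1 = 0 := fun v => by
    rw [Prod.ext_iff, Prod.fst_sum, Prod.snd_sum]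
    rfl
  have hsmul : ∀ (c : S22) (v : Fin m → S22), hermTrace w (c • v)
      = ∑ i, ((w i).1 * (c.2 * (v i).2) + (w i).2 * (c.1 * (v i).1)) := fun _ _ => rfl
  constructor
  · rintro hw v hv
    obtain ⟨h1, h2⟩ := (hcomp v).mp (hw _ ⟨v, hv, rfl⟩)
    rw [hermTrace, Finset.sum_add_distrib, h1, h2, add_zero]
  · rintro hw _ ⟨v, hv, rfl⟩
    refine (hcomp v).mpr ⟨?_, ?_⟩
    · simpa [hsmul] using hw (((0, 1) : S22) • v) (C.smul_mem _ hv)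
    · simpa [hsmul] using hw (((1, 0) : S22) • v) (C.smul_mem _ hv)

lemma wtParity_add (w v : Fin m → S22) :
    wtParity (w + v) = wtParity w + wtParity v + hermTrace w v := by
  simp only [wtParity, hermTrace, ← Finset.sum_add_distrib]
  refine Finset.sum_congr rfl fun i _ => ?_
  simp only [Pi.add_apply, Prod.fst_add, Prod.snd_add]
  generalize (w i).1 = a; generalize (w i).2 = b; generalize (v i).1 = c; generalize (v i).2 = d
  revert a b c d
  decide

lemma wtHS_eq_card (w : Fin m → S22) : wtHS m w = #{i | w i ≠ (0, 0)} := by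
  have hsplit : N0S m w + #{i | w i ≠ (0, 0)} = m := by
    rw [N0S, Finset.card_filter_add_card_filter_not, Finset.card_univ, Fintype.card_fin]
  have hN2 : N2S m w ≤ #{i | w i ≠ (0, 0)} :=
    Finset.card_le_card <| Finset.monotone_filter_right _ fun i _ hi => by rw [hi]; decide
  rw [wtHS, N1S]
  omega

lemma wtParity_eq_zero_iff (w : Fin m → S22) : wtParity w = 0 ↔ 2 ∣ wtHS m w := by
  have hcoord : ∀ a : S22, a.1 + a.2 + a.1 * a.2 = if a ≠ (0, 0) then 1 else 0 := by decide
  rw [wtParity, Finset.sum_congr rfl fun i _ => hcoord (w i), Finset.sum_boole, ← wtHS_eq_card,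
    ZMod.natCast_eq_zero_iff]

end Codes

section Parity

variable {n m : ℕ}

lemma four_dvd_fourB_iff (hn : 4 ∣ n) (x y : Fin m → Fin n → ℤ) :
    4 ∣ fourB x y ↔ hermTrace (rhoS n m x) (rhoS n m y) = 0 := by
  obtain ⟨q, rfl⟩ := hn
  set T := ∑ i, (blockMoment x i * blockSum y i + blockSum x i * blockMoment y i)
  have hdvd : 4 ∣ fourB x y ↔ 2 ∣ T := by
    rw [fourB_eq, show ((4 * q : ℕ) : ℤ) * ∑ i, blockSum x i * blockSum y i
      = 4 * (q * ∑ i, blockSum x i * blockSum y i) by push_cast; ring]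
    omega
  have hcoord : ∀ a b c d : ZMod 2, b * (c + d) + (a + b) * d = a * d + b * c := by decide
  rw [hdvd, ← Nat.cast_ofNat, ← ZMod.intCast_zmod_eq_zero_iff_dvd T 2]
  simp only [T, hermTrace, rhoS, Int.cast_sum, Int.cast_add, Int.cast_mul, intCast_blockSum,
    intCast_blockMoment, hcoord]

lemma eight_dvd_fourB_self_iff (hn : n % 8 = 4) (x : Fin m → Fin n → ℤ) :
    8 ∣ fourB x x ↔ wtParity (rhoS n m x) = 0 := by
  obtain ⟨r, rfl⟩ : ∃ r, n = 8 * r + 4 := ⟨n / 8, by omega⟩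
  set T := ∑ i, blockSum x i * blockSum x i - ∑ i, blockSum x i * blockMoment x i + minForm x x
  have hdvd : 8 ∣ fourB x x ↔ 2 ∣ T := by
    have hsym : ∑ i, (blockMoment x i * blockSum x i + blockSum x i * blockMoment x i)
        = 2 * ∑ i, blockSum x i * blockMoment x i := by
      rw [Finset.mul_sum]
      exact Finset.sum_congr rfl fun i _ => by ring
    rw [fourB_eq, hsym, show ((8 * r + 4 : ℕ) : ℤ) * ∑ i, blockSum x i * blockSum x i
      = 8 * (r * ∑ i, blockSum x i * blockSum x i) + 4 * ∑ i, blockSum x i * blockSum x i by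
        push_cast; ring]
    omega
  have hcoord : ∀ a b : ZMod 2, (a + b) * (a + b) - (a + b) * b + b = a + b + a * b := by decide
  rw [hdvd, ← Nat.cast_ofNat, ← ZMod.intCast_zmod_eq_zero_iff_dvd T 2]
  simp only [T, Int.cast_add, Int.cast_sub, Int.cast_sum, Int.cast_mul, intCast_minForm_self,
    intCast_blockSum, intCast_blockMoment, ← Finset.sum_sub_distrib, ← Finset.sum_add_distrib,
    hcoord]
  rfl

lemma exists_intCast_eq_div_iff {a d : ℤ} (hd : d ≠ 0) :
    (∃ k : ℤ, (k : ℚ) = a / d) ↔ d ∣ a := by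
  refine ⟨fun ⟨k, hk⟩ => ⟨k, ?_⟩, fun ⟨k, hk⟩ => ⟨k, ?_⟩⟩
  · rw [eq_div_iff (by exact_mod_cast hd)] at hk
    exact_mod_cast (hk.symm.trans (mul_comm _ _))
  · rw [hk, eq_div_iff (by exact_mod_cast hd)]
    push_cast
    ring

lemma isInt_BDev_iff (hn : 4 ∣ n) (x y : Fin m → Fin n → ℤ) :
    (∃ k : ℤ, (k : ℚ) = BDev n m (toQD n m x) (toQD n m y))
      ↔ hermTrace (rhoS n m x) (rhoS n m y) = 0 := by
  rw [BDev_toQD, ← four_dvd_fourB_iff hn]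
  exact_mod_cast exists_intCast_eq_div_iff (a := fourB x y) four_ne_zero

lemma isEvenInt_BDev_self_iff (hn : n % 8 = 4) (x : Fin m → Fin n → ℤ) :
    (∃ k : ℤ, ((2 * k : ℤ) : ℚ) = BDev n m (toQD n m x) (toQD n m x))
      ↔ wtParity (rhoS n m x) = 0 := by
  rw [BDev_toQD, ← eight_dvd_fourB_self_iff hn, ← exists_intCast_eq_div_iff (by norm_num)]
  refine exists_congr fun k => ?_
  push_cast
  constructor <;> intro h <;> linarith

end Parity

section Lattice

variable {n m : ℕ}

lemma toQD_injective : Function.Injective (toQD n m) := fun x y h => by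
  funext i j
  simpa [toQD] using congrFun (congrFun h i) j

lemma rhoS_surjective (hn : 2 ≤ n) : Function.Surjective (rhoS n m) := by
  intro w
  let e₀ : Fin n := ⟨0, by omega⟩
  let e₁ : Fin n := ⟨1, by omega⟩
  refine ⟨fun i => Pi.single e₀ ((w i).1.val : ℤ) + Pi.single e₁ ((w i).2.val : ℤ), ?_⟩
  funext i
  simp [rhoS, aD, bD, Finset.sum_add_distrib, Finset.sum_pi_single', e₀, e₁]

def gramRow (z : Fin m → Fin n → ℚ) (i : Fin m) (s : ℤ) : ℚ :=
  ∑ j : Fin n, (fourGram n j s : ℚ) / 4 * z i j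

lemma BDev_single (z : Fin m → Fin n → ℚ) (i : Fin m) (c : Fin n → ℤ) :
    BDev n m z (toQD n m (Pi.single i c)) = ∑ s, (c s : ℚ) * gramRow z i s := by
  rw [BDev_eq_sum_fourGram, Fintype.sum_eq_single i fun i' hi' => by simp [toQD, hi']]
  simp only [toQD, Pi.single_eq_same, gramRow, Finset.mul_sum]
  rw [Finset.sum_comm]
  exact Finset.sum_congr rfl fun s _ => Finset.sum_congr rfl fun j _ => by ring

lemma rhoS_single_pair (i : Fin m) {s t : Fin n} (hst : (s : ℕ) % 2 = t % 2) :
    rhoS n m (Pi.single i (Pi.single s 1 + Pi.single t 1)) = 0 := by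
  funext i'
  rcases eq_or_ne i' i with rfl | hi'
  · simp only [rhoS, aD, bD, Pi.single_eq_same, Pi.add_apply, Finset.sum_add_distrib,
      Finset.sum_pi_single', Finset.mem_filter, Finset.mem_univ, true_and, hst]
    split_ifs <;> rfl
  · simp [rhoS, aD, bD, hi']

lemma gramRow_add_mem (C : Set (Fin m → S22)) (h0 : 0 ∈ C) {z : Fin m → Fin n → ℚ}
    (hz : z ∈ dualLatticeS n m C) (i : Fin m) {s t : Fin n} (hst : (s : ℕ) % 2 = t % 2) :
    gramRow z i s + gramRow z i t ∈ (Int.castAddHom ℚ).range := by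
  obtain ⟨k, hk⟩ := hz _ (show _ ∈ C by rwa [rhoS_single_pair i hst])
  refine ⟨k, ?_⟩
  change (k : ℚ) = _
  rw [hk, BDev_single]
  simp [Finset.sum_add_distrib, add_mul, Pi.single_apply]

lemma fourGram_second_diff (j s : ℤ) :
    2 * fourGram n j s - fourGram n j (s - 1) - fourGram n j (s + 1)
      = if j = s then 4 else 0 := by
  simp only [fourGram, abs_eq_max_neg]
  split_ifs <;> omega

lemma fourGram_neg_one {j : ℤ} (hj : 0 ≤ j) (hjn : j < n) :
    fourGram n j (-1) = -fourGram n j (n - 1) := by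
  simp only [fourGram, abs_eq_max_neg]
  omega

lemma fourGram_natCast {j : ℤ} (hj : 0 ≤ j) (hjn : j < n) :
    fourGram n j n = -fourGram n j 0 := by
  simp only [fourGram, abs_eq_max_neg]
  omega

lemma gramRow_neg_one (z : Fin m → Fin n → ℚ) (i : Fin m) :
    gramRow z i (-1) = -gramRow z i (n - 1) := by
  simp only [gramRow, ← Finset.sum_neg_distrib]
  refine Finset.sum_congr rfl fun j _ => ?_
  rw [fourGram_neg_one (by positivity) (by exact_mod_cast j.isLt)]
  push_cast
  ring

lemma gramRow_natCast (z : Fin m → Fin n → ℚ) (i : Fin m) :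
    gramRow z i n = -gramRow z i 0 := by
  simp only [gramRow, ← Finset.sum_neg_distrib]
  refine Finset.sum_congr rfl fun j _ => ?_
  rw [fourGram_natCast (by positivity) (by exact_mod_cast j.isLt)]
  push_cast
  ring

lemma eq_gramRow_second_diff (z : Fin m → Fin n → ℚ) (i : Fin m) (k : Fin n) :
    z i k = 2 * gramRow z i k - gramRow z i (k - 1) - gramRow z i (k + 1) := by
  simp only [gramRow, Finset.mul_sum, ← Finset.sum_sub_distrib]
  rw [← Fintype.sum_ite_eq' k (fun j => z i j)]
  refine Finset.sum_congr rfl fun j _ => ?_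
  have h : (2 * fourGram n j k - fourGram n j (k - 1) - fourGram n j (k + 1) : ℚ)
      = if j = k then 4 else 0 := by
    exact_mod_cast (fourGram_second_diff (n := n) j k).trans (by simp [Fin.val_inj])
  rcases eq_or_ne j k with rfl | hjk
  · rw [if_pos rfl] at h ⊢
    linear_combination (-z i j / 4) * h
  · rw [if_neg hjk] at h ⊢
    linear_combination (-z i j / 4) * h

lemma mem_range_intCast_of_mem_dualLatticeS (hn : Even n) (C : Set (Fin m → S22)) (h0 : 0 ∈ C)
    {z : Fin m → Fin n → ℚ} (hz : z ∈ dualLatticeS n m C) (i : Fin m) (k : Fin n) :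
    z i k ∈ (Int.castAddHom ℚ).range := by
  rw [eq_gramRow_second_diff z i k]
  set g := gramRow z i
  have hpair : ∀ s t : ℤ, 0 ≤ s ∧ s < n ∧ 0 ≤ t ∧ t < n ∧ s % 2 = t % 2 →
      g s + g t ∈ (Int.castAddHom ℚ).range := by
    rintro s t ⟨hs, hsn, ht, htn, hst⟩
    lift s to ℕ using hs
    lift t to ℕ using ht
    exact gramRow_add_mem C h0 hz i (s := ⟨s, by omega⟩) (t := ⟨t, by omega⟩)
      (show s % 2 = t % 2 by omega)
  have hneg : g (-1) = -g (n - 1) := gramRow_neg_one z i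
  have hnat : g n = -g 0 := gramRow_natCast z i
  obtain ⟨r, hr⟩ := hn
  have hk : (k : ℤ) < n := by exact_mod_cast k.isLt
  rcases (show (k : ℤ) = 0 ∨ (k : ℤ) = n - 1 ∨ (0 < (k : ℤ) ∧ (k : ℤ) < n - 1) by omega)
    with hk0 | hkn | ⟨hk0, hkn⟩
  · rw [hk0, zero_sub, zero_add, hneg, show 2 * g 0 - -g (n - 1) - g 1
      = (g 0 + g 0) + (g (n - 1) + g 1) - (g 1 + g 1) by ring]
    exact sub_mem (add_mem (hpair 0 0 (by omega)) (hpair _ 1 (by omega))) (hpair 1 1 (by omega))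
  · rw [hkn, sub_add_cancel, hnat, show 2 * g (n - 1) - g (n - 1 - 1) - -g 0
      = (g (n - 1) + g (n - 1)) - (g (n - 1 - 1) + g 0) + (g 0 + g 0) by ring]
    exact add_mem (sub_mem (hpair _ _ (by omega)) (hpair _ 0 (by omega))) (hpair 0 0 (by omega))
  · rw [show 2 * g k - g (k - 1) - g (k + 1) = (g k + g k) - (g (k - 1) + g (k + 1)) by ring]
    exact sub_mem (hpair _ _ (by omega)) (hpair _ _ (by omega))

lemma exists_toQD_eq_of_mem_dualLatticeS (hn : Even n) (C : Set (Fin m → S22)) (h0 : 0 ∈ C)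
    {z : Fin m → Fin n → ℚ} (hz : z ∈ dualLatticeS n m C) : ∃ x, toQD n m x = z := by
  choose x hx using mem_range_intCast_of_mem_dualLatticeS hn C h0 hz
  exact ⟨x, funext fun i => funext fun j => hx i j⟩

theorem dualLatticeS_eq (hn0 : n ≠ 0) (hn : 4 ∣ n) (C : Submodule S22 (Fin m → S22)) :
    dualLatticeS n m C = toQD n m '' GammaS n m (dualCodeS m (conjS m '' C)) := by
  ext z
  constructor
  · intro hz
    obtain ⟨x, rfl⟩ := exists_toQD_eq_of_mem_dualLatticeS (even_iff_two_dvd.mpr (by omega))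
      (C : Set (Fin m → S22)) C.zero_mem hz
    refine ⟨x, (mem_dualCodeS_conjS_iff C _).mpr fun v hv => ?_, rfl⟩
    obtain ⟨y, rfl⟩ := rhoS_surjective (n := n) (by omega) v
    exact (isInt_BDev_iff hn x y).mp (hz y hv)
  · rintro ⟨x, hx, rfl⟩ y hy
    exact (isInt_BDev_iff hn x y).mpr ((mem_dualCodeS_conjS_iff C _).mp hx _ hy)

theorem isIntegralS_iff (hn0 : n ≠ 0) (hn : 4 ∣ n) (C : Submodule S22 (Fin m → S22)) :
    IsIntegralS n m C ↔ (C : Set _) ⊆ dualCodeS m (conjS m '' C) := by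
  have hdual : IsIntegralS n m C ↔ toQD n m '' GammaS n m C ⊆ dualLatticeS n m C := by
    rw [Set.image_subset_iff]
    rfl
  rw [hdual, dualLatticeS_eq hn0 hn, Set.image_subset_image_iff toQD_injective]
  exact (rhoS_surjective (by omega)).preimage_subset_preimage_iff

theorem isUnimodularS_iff (hn0 : n ≠ 0) (hn : 4 ∣ n) (C : Submodule S22 (Fin m → S22)) :
    IsUnimodularS n m C ↔ IsHermitianSelfDualS m C := by
  rw [IsUnimodularS, IsHermitianSelfDualS, dualLatticeS_eq hn0 hn]
  exact ((Set.image_injective.mpr toQD_injective).eq_iff.trans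
    (rhoS_surjective (by omega)).preimage_injective.eq_iff).trans eq_comm

theorem isEvenLatS_iff (hn : n % 8 = 4) (C : Submodule S22 (Fin m → S22)) :
    IsEvenLatS n m C ↔ ∀ w ∈ C, 2 ∣ wtHS m w := by
  have hsurj : Function.Surjective (rhoS n m) := rhoS_surjective (by omega)
  simp only [← wtParity_eq_zero_iff]
  constructor
  · rintro ⟨-, heven⟩ w hw
    obtain ⟨x, rfl⟩ := hsurj w
    exact (isEvenInt_BDev_self_iff hn x).mp (heven x hw)
  · intro hw
    refine ⟨fun x hx y hy => (isInt_BDev_iff (by omega) x y).mpr ?_,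
      fun x hx => (isEvenInt_BDev_self_iff hn x).mpr (hw _ hx)⟩
    have hpolar := wtParity_add (rhoS n m x) (rhoS n m y)
    rwa [hw _ (C.add_mem hx hy), hw _ hx, hw _ hy, zero_add, zero_add, eq_comm] at hpolar

end Lattice

theorem stmt16_general (n m : ℕ) (hn4 : 4 ∣ n) (hn8 : ¬ (8 ∣ n))
    (C : Submodule S22 (Fin m → S22)) :
    (IsIntegralS n m (C : Set _) ↔
        (C : Set _) ⊆ dualCodeS m (conjS m '' (C : Set _))) ∧
    (IsUnimodularS n m (C : Set _) ↔ IsHermitianSelfDualS m (C : Set _)) ∧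
    (IsEvenLatS n m (C : Set _) ↔ ∀ w ∈ C, 2 ∣ wtHS m w) ∧
    ((IsEvenLatS n m (C : Set _) ∧ IsUnimodularS n m (C : Set _)) ↔
        IsTypeIVS m (C : Set _)) := by
  have hn : n % 8 = 4 := by omega
  have hn0 : n ≠ 0 := by omega
  have hU := isUnimodularS_iff hn0 hn4 C
  have hE := isEvenLatS_iff hn C
  exact ⟨isIntegralS_iff hn0 hn4 C, hU, hE, and_comm.trans (hU.and hE)⟩

theorem stmt16 (n m : ℕ) (hn : 4 ≤ n) (hn4 : 4 ∣ n) (hn8 : ¬ (8 ∣ n))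
    (hm : 0 < m) (C : Submodule S22 (Fin m → S22)) :
    (IsIntegralS n m (C : Set _) ↔
        (C : Set _) ⊆ dualCodeS m (conjS m '' (C : Set _))) ∧
    (IsUnimodularS n m (C : Set _) ↔ IsHermitianSelfDualS m (C : Set _)) ∧
    (IsEvenLatS n m (C : Set _) ↔ ∀ w ∈ C, 2 ∣ wtHS m w) ∧
    ((IsEvenLatS n m (C : Set _) ∧ IsUnimodularS n m (C : Set _)) ↔
        IsTypeIVS m (C : Set _)) :=
  stmt16_general n m hn4 hn8 C
end

section
/- Let m be a positive integer and C a binary code of length m. Then: (1) Γ_C is integral if and only if C ⊆ C^⊥; (2) Γ_C is unimodular if and only if C = C^⊥; (3) Γ_C is even if and only if 4 divides wt(u) for every u ∈ C; (4) Γ_C is even unimodular if and only if C is Type II. -/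
open Finset

/-- The Gram matrix of the dual basis of the `E₇` root lattice, times 2. -/
def ME7 : Fin 7 → Fin 7 → ℚ :=
  ![![3, 1, 1, 1, 1, 1, 3],
    ![1, 3, 1, 1, 1, 1, 3],
    ![1, 1, 3, 1, 1, 1, 3],
    ![1, 1, 1, 3, 1, 1, 3],
    ![1, 1, 1, 1, 3, 1, 3],
    ![1, 1, 1, 1, 1, 3, 3],
    ![3, 3, 3, 3, 3, 3, 7]]

/-- The bilinear form of `m` copies of the dual `E₇` root lattice,
written in the dual basis. -/
noncomputable def BE7 (m : ℕ) (x y : Fin m → Fin 7 → ℚ) : ℚ :=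
  ∑ i, ∑ j : Fin 7, ∑ s : Fin 7, (1 / 2) * ME7 j s * x i j * y i s

/-- The reduction map to `(ℤ/2ℤ)^m`. -/
def rhoE7 (m : ℕ) (x : Fin m → Fin 7 → ℤ) : Fin m → ZMod 2 :=
  fun i => ((∑ j, x i j : ℤ) : ZMod 2)

/-- The weight of a binary codeword. -/
def wt2 (m : ℕ) (u : Fin m → ZMod 2) : ℕ :=
  (Finset.univ.filter (fun i => u i = 1)).card

/-- The dual code of a set of binary codewords. -/
def dualCode2 (m : ℕ) (C : Set (Fin m → ZMod 2)) : Set (Fin m → ZMod 2) :=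
  {u | ∀ v ∈ C, ∑ i, u i * v i = 0}

/-- The lattice `Γ_C` constructed from the code `C`. -/
def GammaE7 (m : ℕ) (C : Set (Fin m → ZMod 2)) : Set (Fin m → Fin 7 → ℤ) :=
  {x | rhoE7 m x ∈ C}

/-- Coercion of an integral vector to a rational vector. -/
def toQE7 (m : ℕ) (x : Fin m → Fin 7 → ℤ) : Fin m → Fin 7 → ℚ :=
  fun i j => (x i j : ℚ)

/-- The dual lattice `Γ_C^*`, taken inside the `ℚ`-valued vectors. -/
noncomputable def dualLatticeE7 (m : ℕ) (C : Set (Fin m → ZMod 2)) :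
    Set (Fin m → Fin 7 → ℚ) :=
  {z | ∀ y ∈ GammaE7 m C, ∃ k : ℤ, (k : ℚ) = BE7 m z (toQE7 m y)}

/-- `Γ_C` is integral. -/
def IsIntegralE7 (m : ℕ) (C : Set (Fin m → ZMod 2)) : Prop :=
  ∀ x ∈ GammaE7 m C, ∀ y ∈ GammaE7 m C,
    ∃ k : ℤ, (k : ℚ) = BE7 m (toQE7 m x) (toQE7 m y)

/-- `Γ_C` is even. -/
def IsEvenLatE7 (m : ℕ) (C : Set (Fin m → ZMod 2)) : Prop :=
  IsIntegralE7 m C ∧ ∀ x ∈ GammaE7 m C,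
    ∃ k : ℤ, ((2 * k : ℤ) : ℚ) = BE7 m (toQE7 m x) (toQE7 m x)

/-- `Γ_C` is unimodular. -/
def IsUnimodularE7 (m : ℕ) (C : Set (Fin m → ZMod 2)) : Prop :=
  dualLatticeE7 m C = toQE7 m '' GammaE7 m C

open Finset in
lemma me7_expand (a b : Fin 7 → ℚ) :
    ∑ j : Fin 7, ∑ s : Fin 7, (1/2) * ME7 j s * a j * b s
      = (1/2) * (∑ j, a j) * (∑ j, b j) + (∑ j, a j * b j)
        + a 6 * (∑ j, b j) + (∑ j, a j) * b 6 := by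
  simp only [Fin.sum_univ_seven, show ME7 0 0 = 3 from rfl, show ME7 0 1 = 1 from rfl, show ME7 0 2 = 1 from rfl, show ME7 0 3 = 1 from rfl, show ME7 0 4 = 1 from rfl, show ME7 0 5 = 1 from rfl, show ME7 0 6 = 3 from rfl, show ME7 1 0 = 1 from rfl, show ME7 1 1 = 3 from rfl, show ME7 1 2 = 1 from rfl, show ME7 1 3 = 1 from rfl, show ME7 1 4 = 1 from rfl, show ME7 1 5 = 1 from rfl, show ME7 1 6 = 3 from rfl, show ME7 2 0 = 1 from rfl, show ME7 2 1 = 1 from rfl, show ME7 2 2 = 3 from rfl, show ME7 2 3 = 1 from rfl, show ME7 2 4 = 1 from rfl, show ME7 2 5 = 1 from rfl, show ME7 2 6 = 3 from rfl, show ME7 3 0 = 1 from rfl, show ME7 3 1 = 1 from rfl, show ME7 3 2 = 1 from rfl, show ME7 3 3 = 3 from rfl, show ME7 3 4 = 1 from rfl, show ME7 3 5 = 1 from rfl, show ME7 3 6 = 3 from rfl, show ME7 4 0 = 1 from rfl, show ME7 4 1 = 1 from rfl, show ME7 4 2 = 1 from rfl, show ME7 4 3 = 1 from rfl, show ME7 4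 4 = 3 from rfl, show ME7 4 5 = 1 from rfl, show ME7 4 6 = 3 from rfl, show ME7 5 0 = 1 from rfl, show ME7 5 1 = 1 from rfl, show ME7 5 2 = 1 from rfl, show ME7 5 3 = 1 from rfl, show ME7 5 4 = 1 from rfl, show ME7 5 5 = 3 from rfl, show ME7 5 6 = 3 from rfl, show ME7 6 0 = 3 from rfl, show ME7 6 1 = 3 from rfl, show ME7 6 2 = 3 from rfl, show ME7 6 3 = 3 from rfl, show ME7 6 4 = 3 from rfl, show ME7 6 5 = 3 from rfl, show ME7 6 6 = 7 from rfl]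
  ring
open Finset

lemma BE7_eq (m : ℕ) (x y : Fin m → Fin 7 → ℚ) :
    BE7 m x y = ∑ i, ((1/2) * (∑ j, x i j) * (∑ j, y i j) + (∑ j, x i j * y i j)
        + x i 6 * (∑ j, y i j) + (∑ j, x i j) * y i 6) :=
  Finset.sum_congr rfl fun i _ => me7_expand _ _

lemma BE7_int (m : ℕ) (x y : Fin m → Fin 7 → ℤ) :
    BE7 m (toQE7 m x) (toQE7 m y)
      = ((∑ i, (∑ j, x i j) * (∑ j, y i j) : ℤ) : ℚ) / 2 +
        ((∑ i, ((∑ j, x i j * y i j) + x i 6 * (∑ j, y i j) + (∑ j, x i j) * y i 6) : ℤ) : ℚ) := by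
  rw [BE7_eq]
  push_cast
  rw [Finset.sum_div, ← Finset.sum_add_distrib]
  refine Finset.sum_congr rfl fun i _ => ?_
  simp only [toQE7]
  ring

lemma exists_int_iff (m : ℕ) (x y : Fin m → Fin 7 → ℤ) :
    (∃ k : ℤ, (k : ℚ) = BE7 m (toQE7 m x) (toQE7 m y)) ↔
      ∑ i, rhoE7 m x i * rhoE7 m y i = 0 := by
  have hK := BE7_int m x y
  set T : ℤ := ∑ i, (∑ j, x i j) * (∑ j, y i j) with hT
  set K : ℤ := ∑ i, ((∑ j, x i j * y i j) + x i 6 * (∑ j, y i j) + (∑ j, x i j) * y i 6) with hKdef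
  have hcast : ((T : ℤ) : ZMod 2) = ∑ i, rhoE7 m x i * rhoE7 m y i := by
    simp only [rhoE7, hT]
    push_cast
    rfl
  constructor
  · rintro ⟨k, hk⟩
    have h2 : (T : ℚ) = ((2 * (k - K) : ℤ) : ℚ) := by
      push_cast
      rw [hk, hK]
      ring
    have h3 : T = 2 * (k - K) := by exact_mod_cast h2
    rw [← hcast, (ZMod.intCast_zmod_eq_zero_iff_dvd T 2).mpr ⟨k - K, h3⟩]
  · intro h
    have h0 : ((T : ℤ) : ZMod 2) = 0 := by rw [hcast, h]
    obtain ⟨t, ht⟩ := (ZMod.intCast_zmod_eq_zero_iff_dvd T 2).mp h0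
    refine ⟨t + K, ?_⟩
    rw [hK, ht]
    push_cast
    ring
def liftC (m : ℕ) (u : Fin m → ZMod 2) : Fin m → Fin 7 → ℤ :=
  fun i j => if j = 0 then ((u i).val : ℤ) else 0

lemma rho_liftC (m : ℕ) (u : Fin m → ZMod 2) : rhoE7 m (liftC m u) = u := by
  funext i
  simp [rhoE7, liftC, Fin.sum_univ_seven, ZMod.natCast_val, ZMod.cast_id]

lemma liftC_mem (m : ℕ) (C : Set (Fin m → ZMod 2)) (u : Fin m → ZMod 2) (hu : u ∈ C) :
    liftC m u ∈ GammaE7 m C := by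
  show rhoE7 m (liftC m u) ∈ C
  rwa [rho_liftC]

lemma part1 (m : ℕ) (C : Submodule (ZMod 2) (Fin m → ZMod 2)) :
    IsIntegralE7 m (C : Set _) ↔ (C : Set _) ⊆ dualCode2 m (C : Set _) := by
  constructor
  · intro h u hu v hv
    have h2 := h (liftC m u) (liftC_mem m _ u hu) (liftC m v) (liftC_mem m _ v hv)
    rw [exists_int_iff, rho_liftC, rho_liftC] at h2
    exact h2
  · intro h x hx y hy
    rw [exists_int_iff]
    exact h hx (rhoE7 m y) hy
lemma doublyEven_subset (m : ℕ) (C : Submodule (ZMod 2) (Fin m → ZMod 2))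
    (h4 : ∀ u ∈ C, 4 ∣ wt2 m u) : (C : Set _) ⊆ dualCode2 m (C : Set _) := by
  intro u hu v hv
  classical
  set A : Finset (Fin m) := Finset.univ.filter (fun i => u i = 1) with hA
  set B : Finset (Fin m) := Finset.univ.filter (fun i => v i = 1) with hB
  have hmul : ∀ a b : ZMod 2, a * b = if a = 1 ∧ b = 1 then (1 : ZMod 2) else 0 := by decide
  have hsum : ∑ i, u i * v i = ((A ∩ B).card : ZMod 2) := by
    rw [show A ∩ B = Finset.univ.filter (fun i => u i = 1 ∧ v i = 1) by
      rw [hA, hB, Finset.filter_and]]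
    rw [Finset.card_filter]
    push_cast
    exact Finset.sum_congr rfl fun i _ => hmul (u i) (v i)
  have hsplit : Finset.univ.filter (fun i => (u + v) i = 1) = (A \ B) ∪ (B \ A) := by
    have hpt : ∀ a b : ZMod 2, (a + b = 1) ↔ ((a = 1 ∧ ¬ b = 1) ∨ (b = 1 ∧ ¬ a = 1)) := by decide
    ext i
    simp only [hA, hB, Finset.mem_filter, Finset.mem_union, Finset.mem_sdiff, Finset.mem_univ,
      true_and, Pi.add_apply]
    exact hpt (u i) (v i)
  have hwuv : wt2 m (u + v) = (A \ B).card + (B \ A).card := by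
    rw [wt2, hsplit, Finset.card_union_of_disjoint disjoint_sdiff_sdiff]
  have h1 : (A ∩ B).card + (A \ B).card = A.card := Finset.card_inter_add_card_sdiff A B
  have h2 : (B ∩ A).card + (B \ A).card = B.card := Finset.card_inter_add_card_sdiff B A
  have hBA : (B ∩ A).card = (A ∩ B).card := by rw [Finset.inter_comm]
  have d1 : 4 ∣ A.card := h4 u hu
  have d2 : 4 ∣ B.card := h4 v hv
  have d3 : 4 ∣ wt2 m (u + v) := h4 (u + v) (C.add_mem hu hv)
  rw [hwuv] at d3
  have h2d : 2 ∣ (A ∩ B).card := by omega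
  rw [hsum]
  obtain ⟨t, ht⟩ := h2d
  rw [ht]
  push_cast
  rw [show (2 : ZMod 2) = 0 from rfl, zero_mul]
lemma quad_aux (S c A : ℤ) :
    ∃ q : ℤ, S*S + 2*((S + 2*c) + A*S + S*A) = 4*q + 3*(S % 2) := by
  rcases Int.even_or_odd S with ⟨t, ht⟩ | ⟨t, ht⟩
  · refine ⟨t*t + t + c + A*S, ?_⟩
    have h2 : S % 2 = 0 := by omega
    rw [h2, ht]
    ring
  · refine ⟨t*t + 2*t + c + A*S, ?_⟩
    have h2 : S % 2 = 1 := by omega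
    rw [h2, ht]
    ring

lemma quad_copy (a : Fin 7 → ℤ) :
    ∃ q : ℤ, (∑ j, a j) * (∑ j, a j)
        + 2*((∑ j, a j * a j) + a 6 * (∑ j, a j) + (∑ j, a j) * a 6)
      = 4 * q + 3 * ((∑ j, a j) % 2) := by
  obtain ⟨c, hc⟩ : ∃ c : ℤ, ∑ j, a j * a j = (∑ j, a j) + 2*c := by
    have hd : (2:ℤ) ∣ ∑ j : Fin 7, (a j * a j - a j) := by
      refine Finset.dvd_sum fun j _ => ?_
      obtain ⟨r, hr⟩ := Int.even_mul_succ_self (a j - 1)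
      exact ⟨r, by linarith⟩
    obtain ⟨c, hc⟩ := hd
    rw [Finset.sum_sub_distrib] at hc
    exact ⟨c, by linarith⟩
  rw [hc]
  exact quad_aux _ c (a 6)

lemma emod_two_eq (S : ℤ) : S % 2 = if ((S : ZMod 2) = 1) then 1 else 0 := by
  rcases Int.even_or_odd S with ⟨t, ht⟩ | ⟨t, ht⟩
  · have h0 : ((S : ZMod 2)) = 0 := (ZMod.intCast_zmod_eq_zero_iff_dvd S 2).mpr ⟨t, by omega⟩
    rw [h0, if_neg (by decide)]
    omega
  · have h1 : ((S : ZMod 2)) = 1 := by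
      rw [ht]; push_cast; rw [show (2 : ZMod 2) = 0 from rfl]; ring
    rw [h1, if_pos rfl]
    omega

lemma sum_emod (m : ℕ) (x : Fin m → Fin 7 → ℤ) :
    ∑ i, ((∑ j, x i j) % 2) = (wt2 m (rhoE7 m x) : ℤ) := by
  rw [wt2, Finset.card_filter]
  push_cast
  refine Finset.sum_congr rfl fun i _ => ?_
  rw [emod_two_eq]
  rfl
lemma wt_cast (m : ℕ) (u : Fin m → ZMod 2) :
    (wt2 m u : ℚ) = ∑ i, ((u i).val : ℚ) := by
  rw [wt2, Finset.card_filter]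
  push_cast
  refine Finset.sum_congr rfl fun i _ => ?_
  have hn : (u i).val = if u i = 1 then 1 else 0 := by
    generalize u i = a; revert a; decide
  rw [hn]
  split_ifs <;> norm_num

lemma BE7_lift (m : ℕ) (u : Fin m → ZMod 2) :
    BE7 m (toQE7 m (liftC m u)) (toQE7 m (liftC m u)) = (3:ℚ)/2 * (wt2 m u : ℚ) := by
  rw [BE7_eq, wt_cast, Finset.mul_sum]
  refine Finset.sum_congr rfl fun i _ => ?_
  have hval : (u i).val = 0 ∨ (u i).val = 1 := by
    have := ZMod.val_lt (u i); omega
  rcases hval with h | h <;>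
    simp [toQE7, liftC, Fin.sum_univ_seven, h] <;> norm_num

lemma part3 (m : ℕ) (C : Submodule (ZMod 2) (Fin m → ZMod 2)) :
    IsEvenLatE7 m (C : Set _) ↔ ∀ u ∈ C, 4 ∣ wt2 m u := by
  constructor
  · rintro ⟨hint, hev⟩ u hu
    obtain ⟨k, hk⟩ := hev (liftC m u) (liftC_mem m _ u hu)
    rw [BE7_lift] at hk
    have h1 : ((4*k : ℤ) : ℚ) = ((3 * wt2 m u : ℕ) : ℤ) := by push_cast at hk ⊢; linarith
    have h2 : (4*k : ℤ) = ((3 * wt2 m u : ℕ) : ℤ) := by exact_mod_cast h1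
    have h3 : (4 : ℤ) ∣ ((3 * wt2 m u : ℕ) : ℤ) := ⟨k, by linarith⟩
    have h4 : 4 ∣ 3 * wt2 m u := by exact_mod_cast h3
    omega
  · intro h4
    refine ⟨(part1 m C).mpr (doublyEven_subset m C h4), fun x hx => ?_⟩
    have hB := BE7_int m x x
    have hq : ∀ i : Fin m, ∃ q : ℤ, (∑ j, x i j) * (∑ j, x i j)
        + 2*((∑ j, x i j * x i j) + x i 6 * (∑ j, x i j) + (∑ j, x i j) * x i 6)
        = 4 * q + 3 * ((∑ j, x i j) % 2) := fun i => quad_copy (x i)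
    choose q hqs using hq
    have hsum : (∑ i, (∑ j, x i j) * (∑ j, x i j))
        + 2 * (∑ i, ((∑ j, x i j * x i j) + x i 6 * (∑ j, x i j) + (∑ j, x i j) * x i 6))
        = 4 * (∑ i, q i) + 3 * (wt2 m (rhoE7 m x) : ℤ) := by
      rw [← sum_emod, Finset.mul_sum, Finset.mul_sum, Finset.mul_sum,
        ← Finset.sum_add_distrib, ← Finset.sum_add_distrib]
      exact Finset.sum_congr rfl fun i _ => hqs i
    obtain ⟨w4, hw4⟩ := h4 (rhoE7 m x) hx
    refine ⟨(∑ i, q i) + 3 * w4, ?_⟩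
    rw [hB]
    rw [hw4] at hsum
    have hQ := congrArg (fun z : ℤ => (z : ℚ)) hsum
    push_cast at hQ ⊢
    linarith
def testVec (m : ℕ) (i : Fin m) (p : Fin 7 → ℤ) : Fin m → Fin 7 → ℤ :=
  fun i' j => if i' = i then p j else 0

lemma testVec_mem (m : ℕ) (C : Submodule (ZMod 2) (Fin m → ZMod 2)) (i : Fin m)
    (p : Fin 7 → ℤ) (hp : (2:ℤ) ∣ ∑ j, p j) : testVec m i p ∈ GammaE7 m (C : Set _) := by
  have h0 : rhoE7 m (testVec m i p) = 0 := by
    funext i'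
    simp only [rhoE7, testVec]
    by_cases h : i' = i
    · subst h
      simp only [if_pos rfl, Pi.zero_apply]
      rw [show (∑ j : Fin 7, (if True then p j else 0)) = ∑ j, p j from
        Finset.sum_congr rfl fun j _ => if_pos trivial]
      exact (ZMod.intCast_zmod_eq_zero_iff_dvd _ 2).mpr hp
    · simp [h]
  show rhoE7 m (testVec m i p) ∈ (C : Set _)
  rw [h0]
  exact C.zero_mem

lemma BE7_testVec (m : ℕ) (z : Fin m → Fin 7 → ℚ) (i : Fin m) (p : Fin 7 → ℤ) :
    BE7 m z (toQE7 m (testVec m i p)) =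
      (1/2) * (∑ j, z i j) * (∑ j, (p j : ℚ)) + (∑ j, z i j * (p j : ℚ))
        + z i 6 * (∑ j, (p j : ℚ)) + (∑ j, z i j) * (p 6 : ℚ) := by
  rw [BE7_eq, Finset.sum_eq_single i]
  · simp [toQE7, testVec]
  · intro i' _ h
    simp [toQE7, testVec, h]
  · intro h
    exact absurd (Finset.mem_univ i) h
set_option maxHeartbeats 2000000 in
lemma dual_sub (m : ℕ) (C : Submodule (ZMod 2) (Fin m → ZMod 2)) :
    dualLatticeE7 m (C : Set _) ⊆ toQE7 m '' GammaE7 m (dualCode2 m (C : Set _)) := by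
  intro z hz
  have key : ∀ i : Fin m, ∀ j : Fin 7, ∃ k : ℤ, z i j = (k : ℚ) := by
    intro i j
    have cond : ∀ p : Fin 7 → ℤ, (2:ℤ) ∣ (∑ j, p j) → ∃ k : ℤ, (k:ℚ) =
        (1/2) * (∑ j, z i j) * (∑ j, (p j : ℚ)) + (∑ j, z i j * (p j : ℚ))
          + z i 6 * (∑ j, (p j : ℚ)) + (∑ j, z i j) * (p 6 : ℚ) := by
      intro p hp
      have h := hz _ (testVec_mem m C i p hp)
      rwa [BE7_testVec] at h
    obtain ⟨kG1, hG1⟩ := cond ![1,1,0,0,0,0,0] (by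
      rw [show (∑ j, (![1,1,0,0,0,0,0] : Fin 7 → ℤ) j) = 2 by
        simp only [Fin.sum_univ_seven, show (![1,1,0,0,0,0,0] : Fin 7 → ℤ) 0 = 1 from rfl, show (![1,1,0,0,0,0,0] : Fin 7 → ℤ) 1 = 1 from rfl, show (![1,1,0,0,0,0,0] : Fin 7 → ℤ) 2 = 0 from rfl, show (![1,1,0,0,0,0,0] : Fin 7 → ℤ) 3 = 0 from rfl, show (![1,1,0,0,0,0,0] : Fin 7 → ℤ) 4 = 0 from rfl, show (![1,1,0,0,0,0,0] : Fin 7 → ℤ) 5 = 0 from rfl, show (![1,1,0,0,0,0,0] : Fin 7 → ℤ) 6 = 0 from rfl]; norm_num])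
    obtain ⟨kG2, hG2⟩ := cond ![1,0,1,0,0,0,0] (by
      rw [show (∑ j, (![1,0,1,0,0,0,0] : Fin 7 → ℤ) j) = 2 by
        simp only [Fin.sum_univ_seven, show (![1,0,1,0,0,0,0] : Fin 7 → ℤ) 0 = 1 from rfl, show (![1,0,1,0,0,0,0] : Fin 7 → ℤ) 1 = 0 from rfl, show (![1,0,1,0,0,0,0] : Fin 7 → ℤ) 2 = 1 from rfl, show (![1,0,1,0,0,0,0] : Fin 7 → ℤ) 3 = 0 from rfl, show (![1,0,1,0,0,0,0] : Fin 7 → ℤ) 4 = 0 from rfl, show (![1,0,1,0,0,0,0] : Fin 7 → ℤ) 5 = 0 from rfl, show (![1,0,1,0,0,0,0] : Fin 7 → ℤ) 6 = 0 from rfl]; norm_num])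
    obtain ⟨kG3, hG3⟩ := cond ![1,0,0,1,0,0,0] (by
      rw [show (∑ j, (![1,0,0,1,0,0,0] : Fin 7 → ℤ) j) = 2 by
        simp only [Fin.sum_univ_seven, show (![1,0,0,1,0,0,0] : Fin 7 → ℤ) 0 = 1 from rfl, show (![1,0,0,1,0,0,0] : Fin 7 → ℤ) 1 = 0 from rfl, show (![1,0,0,1,0,0,0] : Fin 7 → ℤ) 2 = 0 from rfl, show (![1,0,0,1,0,0,0] : Fin 7 → ℤ) 3 = 1 from rfl, show (![1,0,0,1,0,0,0] : Fin 7 → ℤ) 4 = 0 from rfl, show (![1,0,0,1,0,0,0] : Fin 7 → ℤ) 5 = 0 from rfl, show (![1,0,0,1,0,0,0] : Fin 7 → ℤ) 6 = 0 from rfl]; norm_num])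
    obtain ⟨kG4, hG4⟩ := cond ![1,0,0,0,1,0,0] (by
      rw [show (∑ j, (![1,0,0,0,1,0,0] : Fin 7 → ℤ) j) = 2 by
        simp only [Fin.sum_univ_seven, show (![1,0,0,0,1,0,0] : Fin 7 → ℤ) 0 = 1 from rfl, show (![1,0,0,0,1,0,0] : Fin 7 → ℤ) 1 = 0 from rfl, show (![1,0,0,0,1,0,0] : Fin 7 → ℤ) 2 = 0 from rfl, show (![1,0,0,0,1,0,0] : Fin 7 → ℤ) 3 = 0 from rfl, show (![1,0,0,0,1,0,0] : Fin 7 → ℤ) 4 = 1 from rfl, show (![1,0,0,0,1,0,0] : Fin 7 → ℤ) 5 = 0 from rfl, show (![1,0,0,0,1,0,0] : Fin 7 → ℤ) 6 = 0 from rfl]; norm_num])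
    obtain ⟨kG5, hG5⟩ := cond ![1,0,0,0,0,1,0] (by
      rw [show (∑ j, (![1,0,0,0,0,1,0] : Fin 7 → ℤ) j) = 2 by
        simp only [Fin.sum_univ_seven, show (![1,0,0,0,0,1,0] : Fin 7 → ℤ) 0 = 1 from rfl, show (![1,0,0,0,0,1,0] : Fin 7 → ℤ) 1 = 0 from rfl, show (![1,0,0,0,0,1,0] : Fin 7 → ℤ) 2 = 0 from rfl, show (![1,0,0,0,0,1,0] : Fin 7 → ℤ) 3 = 0 from rfl, show (![1,0,0,0,0,1,0] : Fin 7 → ℤ) 4 = 0 from rfl, show (![1,0,0,0,0,1,0] : Fin 7 → ℤ) 5 = 1 from rfl, show (![1,0,0,0,0,1,0] : Fin 7 → ℤ) 6 = 0 from rfl]; norm_num])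
    obtain ⟨kA2, hA2⟩ := cond ![2,0,0,0,0,0,0] (by
      rw [show (∑ j, (![2,0,0,0,0,0,0] : Fin 7 → ℤ) j) = 2 by
        simp only [Fin.sum_univ_seven, show (![2,0,0,0,0,0,0] : Fin 7 → ℤ) 0 = 2 from rfl, show (![2,0,0,0,0,0,0] : Fin 7 → ℤ) 1 = 0 from rfl, show (![2,0,0,0,0,0,0] : Fin 7 → ℤ) 2 = 0 from rfl, show (![2,0,0,0,0,0,0] : Fin 7 → ℤ) 3 = 0 from rfl, show (![2,0,0,0,0,0,0] : Fin 7 → ℤ) 4 = 0 from rfl, show (![2,0,0,0,0,0,0] : Fin 7 → ℤ) 5 = 0 from rfl, show (![2,0,0,0,0,0,0] : Fin 7 → ℤ) 6 = 0 from rfl]; norm_num])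
    obtain ⟨kA3, hA3⟩ := cond ![1,0,0,0,0,0,1] (by
      rw [show (∑ j, (![1,0,0,0,0,0,1] : Fin 7 → ℤ) j) = 2 by
        simp only [Fin.sum_univ_seven, show (![1,0,0,0,0,0,1] : Fin 7 → ℤ) 0 = 1 from rfl, show (![1,0,0,0,0,0,1] : Fin 7 → ℤ) 1 = 0 from rfl, show (![1,0,0,0,0,0,1] : Fin 7 → ℤ) 2 = 0 from rfl, show (![1,0,0,0,0,0,1] : Fin 7 → ℤ) 3 = 0 from rfl, show (![1,0,0,0,0,0,1] : Fin 7 → ℤ) 4 = 0 from rfl, show (![1,0,0,0,0,0,1] : Fin 7 → ℤ) 5 = 0 from rfl, show (![1,0,0,0,0,0,1] : Fin 7 → ℤ) 6 = 1 from rfl]; norm_num])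
    obtain ⟨kA4, hA4⟩ := cond ![0,0,0,0,0,0,2] (by
      rw [show (∑ j, (![0,0,0,0,0,0,2] : Fin 7 → ℤ) j) = 2 by
        simp only [Fin.sum_univ_seven, show (![0,0,0,0,0,0,2] : Fin 7 → ℤ) 0 = 0 from rfl, show (![0,0,0,0,0,0,2] : Fin 7 → ℤ) 1 = 0 from rfl, show (![0,0,0,0,0,0,2] : Fin 7 → ℤ) 2 = 0 from rfl, show (![0,0,0,0,0,0,2] : Fin 7 → ℤ) 3 = 0 from rfl, show (![0,0,0,0,0,0,2] : Fin 7 → ℤ) 4 = 0 from rfl, show (![0,0,0,0,0,0,2] : Fin 7 → ℤ) 5 = 0 from rfl, show (![0,0,0,0,0,0,2] : Fin 7 → ℤ) 6 = 2 from rfl]; norm_num])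
    simp only [Fin.sum_univ_seven, show (![1,1,0,0,0,0,0] : Fin 7 → ℤ) 0 = 1 from rfl, show (![1,1,0,0,0,0,0] : Fin 7 → ℤ) 1 = 1 from rfl, show (![1,1,0,0,0,0,0] : Fin 7 → ℤ) 2 = 0 from rfl, show (![1,1,0,0,0,0,0] : Fin 7 → ℤ) 3 = 0 from rfl, show (![1,1,0,0,0,0,0] : Fin 7 → ℤ) 4 = 0 from rfl, show (![1,1,0,0,0,0,0] : Fin 7 → ℤ) 5 = 0 from rfl, show (![1,1,0,0,0,0,0] : Fin 7 → ℤ) 6 = 0 from rfl] at hG1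
    push_cast at hG1
    simp only [Fin.sum_univ_seven, show (![1,0,1,0,0,0,0] : Fin 7 → ℤ) 0 = 1 from rfl, show (![1,0,1,0,0,0,0] : Fin 7 → ℤ) 1 = 0 from rfl, show (![1,0,1,0,0,0,0] : Fin 7 → ℤ) 2 = 1 from rfl, show (![1,0,1,0,0,0,0] : Fin 7 → ℤ) 3 = 0 from rfl, show (![1,0,1,0,0,0,0] : Fin 7 → ℤ) 4 = 0 from rfl, show (![1,0,1,0,0,0,0] : Fin 7 → ℤ) 5 = 0 from rfl, show (![1,0,1,0,0,0,0] : Fin 7 → ℤ) 6 = 0 from rfl] at hG2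
    push_cast at hG2
    simp only [Fin.sum_univ_seven, show (![1,0,0,1,0,0,0] : Fin 7 → ℤ) 0 = 1 from rfl, show (![1,0,0,1,0,0,0] : Fin 7 → ℤ) 1 = 0 from rfl, show (![1,0,0,1,0,0,0] : Fin 7 → ℤ) 2 = 0 from rfl, show (![1,0,0,1,0,0,0] : Fin 7 → ℤ) 3 = 1 from rfl, show (![1,0,0,1,0,0,0] : Fin 7 → ℤ) 4 = 0 from rfl, show (![1,0,0,1,0,0,0] : Fin 7 → ℤ) 5 = 0 from rfl, show (![1,0,0,1,0,0,0] : Fin 7 → ℤ) 6 = 0 from rfl] at hG3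
    push_cast at hG3
    simp only [Fin.sum_univ_seven, show (![1,0,0,0,1,0,0] : Fin 7 → ℤ) 0 = 1 from rfl, show (![1,0,0,0,1,0,0] : Fin 7 → ℤ) 1 = 0 from rfl, show (![1,0,0,0,1,0,0] : Fin 7 → ℤ) 2 = 0 from rfl, show (![1,0,0,0,1,0,0] : Fin 7 → ℤ) 3 = 0 from rfl, show (![1,0,0,0,1,0,0] : Fin 7 → ℤ) 4 = 1 from rfl, show (![1,0,0,0,1,0,0] : Fin 7 → ℤ) 5 = 0 from rfl, show (![1,0,0,0,1,0,0] : Fin 7 → ℤ) 6 = 0 from rfl] at hG4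
    push_cast at hG4
    simp only [Fin.sum_univ_seven, show (![1,0,0,0,0,1,0] : Fin 7 → ℤ) 0 = 1 from rfl, show (![1,0,0,0,0,1,0] : Fin 7 → ℤ) 1 = 0 from rfl, show (![1,0,0,0,0,1,0] : Fin 7 → ℤ) 2 = 0 from rfl, show (![1,0,0,0,0,1,0] : Fin 7 → ℤ) 3 = 0 from rfl, show (![1,0,0,0,0,1,0] : Fin 7 → ℤ) 4 = 0 from rfl, show (![1,0,0,0,0,1,0] : Fin 7 → ℤ) 5 = 1 from rfl, show (![1,0,0,0,0,1,0] : Fin 7 → ℤ) 6 = 0 from rfl] at hG5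
    push_cast at hG5
    simp only [Fin.sum_univ_seven, show (![2,0,0,0,0,0,0] : Fin 7 → ℤ) 0 = 2 from rfl, show (![2,0,0,0,0,0,0] : Fin 7 → ℤ) 1 = 0 from rfl, show (![2,0,0,0,0,0,0] : Fin 7 → ℤ) 2 = 0 from rfl, show (![2,0,0,0,0,0,0] : Fin 7 → ℤ) 3 = 0 from rfl, show (![2,0,0,0,0,0,0] : Fin 7 → ℤ) 4 = 0 from rfl, show (![2,0,0,0,0,0,0] : Fin 7 → ℤ) 5 = 0 from rfl, show (![2,0,0,0,0,0,0] : Fin 7 → ℤ) 6 = 0 from rfl] at hA2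
    push_cast at hA2
    simp only [Fin.sum_univ_seven, show (![1,0,0,0,0,0,1] : Fin 7 → ℤ) 0 = 1 from rfl, show (![1,0,0,0,0,0,1] : Fin 7 → ℤ) 1 = 0 from rfl, show (![1,0,0,0,0,0,1] : Fin 7 → ℤ) 2 = 0 from rfl, show (![1,0,0,0,0,0,1] : Fin 7 → ℤ) 3 = 0 from rfl, show (![1,0,0,0,0,0,1] : Fin 7 → ℤ) 4 = 0 from rfl, show (![1,0,0,0,0,0,1] : Fin 7 → ℤ) 5 = 0 from rfl, show (![1,0,0,0,0,0,1] : Fin 7 → ℤ) 6 = 1 from rfl] at hA3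
    push_cast at hA3
    simp only [Fin.sum_univ_seven, show (![0,0,0,0,0,0,2] : Fin 7 → ℤ) 0 = 0 from rfl, show (![0,0,0,0,0,0,2] : Fin 7 → ℤ) 1 = 0 from rfl, show (![0,0,0,0,0,0,2] : Fin 7 → ℤ) 2 = 0 from rfl, show (![0,0,0,0,0,0,2] : Fin 7 → ℤ) 3 = 0 from rfl, show (![0,0,0,0,0,0,2] : Fin 7 → ℤ) 4 = 0 from rfl, show (![0,0,0,0,0,0,2] : Fin 7 → ℤ) 5 = 0 from rfl, show (![0,0,0,0,0,0,2] : Fin 7 → ℤ) 6 = 2 from rfl] at hA4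
    push_cast at hA4
    clear cond hz
    fin_cases j
    · show ∃ k : ℤ, z i 0 = (k : ℚ)
      refine ⟨kG1 + kG2 + kG3 + kG4 + kG5 - kA2 - kA3 - kA4, ?_⟩
      push_cast
      linarith [hG1, hG2, hG3, hG4, hG5, hA2, hA3, hA4]
    · show ∃ k : ℤ, z i 1 = (k : ℚ)
      refine ⟨(kG1 + kG2 + kG3 + kG4 + kG5 - kA2 - kA3 - kA4) + kG1 - kA2, ?_⟩
      push_cast
      linarith [hG1, hG2, hG3, hG4, hG5, hA2, hA3, hA4]
    · show ∃ k : ℤ, z i 2 = (k : ℚ)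
      refine ⟨(kG1 + kG2 + kG3 + kG4 + kG5 - kA2 - kA3 - kA4) + kG2 - kA2, ?_⟩
      push_cast
      linarith [hG1, hG2, hG3, hG4, hG5, hA2, hA3, hA4]
    · show ∃ k : ℤ, z i 3 = (k : ℚ)
      refine ⟨(kG1 + kG2 + kG3 + kG4 + kG5 - kA2 - kA3 - kA4) + kG3 - kA2, ?_⟩
      push_cast
      linarith [hG1, hG2, hG3, hG4, hG5, hA2, hA3, hA4]
    · show ∃ k : ℤ, z i 4 = (k : ℚ)
      refine ⟨(kG1 + kG2 + kG3 + kG4 + kG5 - kA2 - kA3 - kA4) + kG4 - kA2, ?_⟩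
      push_cast
      linarith [hG1, hG2, hG3, hG4, hG5, hA2, hA3, hA4]
    · show ∃ k : ℤ, z i 5 = (k : ℚ)
      refine ⟨(kG1 + kG2 + kG3 + kG4 + kG5 - kA2 - kA3 - kA4) + kG5 - kA2, ?_⟩
      push_cast
      linarith [hG1, hG2, hG3, hG4, hG5, hA2, hA3, hA4]
    · show ∃ k : ℤ, z i 6 = (k : ℚ)
      refine ⟨2*kA2 - kA3 - 3*(kG1 + kG2 + kG3 + kG4 + kG5 - kA2 - kA3 - kA4), ?_⟩
      push_cast
      linarith [hG1, hG2, hG3, hG4, hG5, hA2, hA3, hA4]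
  choose k hk using key
  have hz' : z = toQE7 m k := funext fun i => funext fun j => hk i j
  refine ⟨k, ?_, hz'.symm⟩
  show rhoE7 m k ∈ dualCode2 m (C : Set _)
  intro u hu
  have h := hz (liftC m u) (liftC_mem m _ u hu)
  rw [hz', exists_int_iff, rho_liftC] at h
  exact h
lemma toQ_inj (m : ℕ) : Function.Injective (toQE7 m) := fun a b h =>
  funext fun i => funext fun j => by
    have h2 : (a i j : ℚ) = (b i j : ℚ) := congrFun (congrFun h i) j
    exact_mod_cast h2

lemma dual_eq (m : ℕ) (C : Submodule (ZMod 2) (Fin m → ZMod 2)) :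
    dualLatticeE7 m (C : Set _) = toQE7 m '' GammaE7 m (dualCode2 m (C : Set _)) := by
  refine subset_antisymm (dual_sub m C) ?_
  rintro z ⟨x, hx, rfl⟩ y hy
  rw [exists_int_iff]
  exact hx (rhoE7 m y) hy

lemma part2 (m : ℕ) (C : Submodule (ZMod 2) (Fin m → ZMod 2)) :
    IsUnimodularE7 m (C : Set _) ↔ (C : Set _) = dualCode2 m (C : Set _) := by
  rw [IsUnimodularE7, dual_eq]
  constructor
  · intro h
    have hG : GammaE7 m (dualCode2 m (C : Set _)) = GammaE7 m (C : Set _) :=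
      Set.image_injective.mpr (toQ_inj m) h
    ext u
    constructor
    · intro hu
      have h1 := liftC_mem m (C : Set _) u hu
      rw [← hG] at h1
      have h2 : rhoE7 m (liftC m u) ∈ dualCode2 m (C : Set _) := h1
      rwa [rho_liftC] at h2
    · intro hu
      have h1 := liftC_mem m (dualCode2 m (C : Set _)) u hu
      rw [hG] at h1
      have h2 : rhoE7 m (liftC m u) ∈ (C : Set _) := h1
      rwa [rho_liftC] at h2
  · intro h
    rw [← h]

theorem stmt19 (m : ℕ) (hm : 0 < m)
    (C : Submodule (ZMod 2) (Fin m → ZMod 2)) :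
    (IsIntegralE7 m (C : Set _) ↔ (C : Set _) ⊆ dualCode2 m (C : Set _)) ∧
    (IsUnimodularE7 m (C : Set _) ↔ (C : Set _) = dualCode2 m (C : Set _)) ∧
    (IsEvenLatE7 m (C : Set _) ↔ ∀ u ∈ C, 4 ∣ wt2 m u) ∧
    ((IsEvenLatE7 m (C : Set _) ∧ IsUnimodularE7 m (C : Set _)) ↔
        ((C : Set _) = dualCode2 m (C : Set _) ∧ ∀ u ∈ C, 4 ∣ wt2 m u)) := by
  refine ⟨part1 m C, part2 m C, part3 m C, ?_⟩
  constructor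
  · rintro ⟨he, hu⟩
    exact ⟨(part2 m C).mp hu, (part3 m C).mp he⟩
  · rintro ⟨h1, h2⟩
    exact ⟨(part3 m C).mpr h2, (part2 m C).mpr h1⟩
end
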